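/- Let N ≥ 1, M > 0, and let x, y ∈ ℝ^N satisfy 0 ≤ x_n ≤ M and 0 ≤ y_n ≤ M for all n. Then d^N(x, y) ≤ d_GH(K_x, K_y), where K_x and K_y are regarded as nonempty compact metric subspaces of ℝ² with the Chebyshev distance and d_GH is the Gromov–Hausdorff distance. -/

import Mathlib

/-!
Let `r = d_GH(K_x, K_y) < M` (otherwise there is nothing to prove). An optimal coupling gives
maps `f : K_x → K_y`, `g : K_y → K_x` of distortion at most `2r` with `g ∘ f` and `f ∘ g` within
`2r` of the identity. The pieces of `K_z` (the pairs `{p_n^+, p_n^-}` and the boxes) are at least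
`4M` apart, so `f` moves pairs into pairs: a box contains three points `2M` apart and cannot be
squeezed into a two-point pair, and a pair sent into a box would be sent back into a box by `g`.
The largest distance from the `n`-th pair to the rest of `K_z` is `2M · max(5n, 5(N-1-n)+3)`;
these values are distinct multiples of `2M`, and `f` changes them by at most `2r < 2M`, so `f`
sends the `n`-th pair of `K_x` into the `n`-th pair of `K_y`. The points `p_n^±(x)` are `2 x_n`
apart and their images are either equal or `2 y_n` apart, whence `x_n ≤ r` or
`|x_n - y_n| ≤ r`; together with the same alternative for `g` this gives `|x_n - y_n| ≤ r`.
-/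

noncomputable def box (M : ℝ) (n : ℕ) : Set (ℝ × ℝ) :=
  Set.Icc (4 * M + 10 * M * (n : ℝ)) (4 * M + 10 * M * (n : ℝ) + 2 * M) ×ˢ Set.Icc (-M) M

noncomputable def pp {N : ℕ} (M : ℝ) (z : Fin N → ℝ) (n : Fin N) : ℝ × ℝ :=
  (10 * M * ((n : ℕ) : ℝ), z n)

noncomputable def pm {N : ℕ} (M : ℝ) (z : Fin N → ℝ) (n : Fin N) : ℝ × ℝ :=
  (10 * M * ((n : ℕ) : ℝ), -(z n))

noncomputable def Kset {N : ℕ} (M : ℝ) (z : Fin N → ℝ) : Set (ℝ × ℝ) :=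
  ⋃ n : Fin N, ({pp M z n, pm M z n} ∪ box M n)

theorem pp_mem {N : ℕ} (M : ℝ) (z : Fin N → ℝ) (n : Fin N) : pp M z n ∈ Kset M z :=
  Set.mem_iUnion.mpr ⟨n, Or.inl (Set.mem_insert _ _)⟩

theorem pm_mem {N : ℕ} (M : ℝ) (z : Fin N → ℝ) (n : Fin N) : pm M z n ∈ Kset M z :=
  Set.mem_iUnion.mpr ⟨n, Or.inl (Set.mem_insert_of_mem _ rfl)⟩

theorem Kset_compact {N : ℕ} (M : ℝ) (z : Fin N → ℝ) : IsCompact (Kset M z) := by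
  apply isCompact_iUnion
  intro n
  exact ((Set.toFinite _).isCompact).union (isCompact_Icc.prod isCompact_Icc)

instance {N : ℕ} (M : ℝ) (z : Fin N → ℝ) : CompactSpace ↥(Kset M z) :=
  isCompact_iff_compactSpace.mp (Kset_compact M z)

theorem Kset_nonempty {N : ℕ} (hN : 0 < N) (M : ℝ) (z : Fin N → ℝ) : (Kset M z).Nonempty :=
  ⟨pp M z ⟨0, hN⟩, pp_mem M z ⟨0, hN⟩⟩

open Metric GromovHausdorff

section GHApprox

variable {X Y : Type*} [PseudoMetricSpace X] [PseudoMetricSpace Y]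

structure IsGHApprox (ε : ℝ) (f : X → Y) (g : Y → X) : Prop where
  distortion_left : ∀ a b, |dist (f a) (f b) - dist a b| ≤ ε
  distortion_right : ∀ a b, |dist (g a) (g b) - dist a b| ≤ ε
  leftInverse : ∀ a, dist (g (f a)) a ≤ ε
  rightInverse : ∀ b, dist (f (g b)) b ≤ ε

variable {ε : ℝ} {f : X → Y} {g : Y → X}

namespace IsGHApprox

theorem symm (h : IsGHApprox ε f g) : IsGHApprox ε g f :=
  ⟨h.distortion_right, h.distortion_left, h.rightInverse, h.leftInverse⟩

theorem dist_le (h : IsGHApprox ε f g) (a b : X) : dist (f a) (f b) ≤ dist a b + ε := by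
  linarith [(abs_le.1 (h.distortion_left a b)).2]

theorem le_dist (h : IsGHApprox ε f g) (a b : X) : dist a b ≤ dist (f a) (f b) + ε := by
  linarith [(abs_le.1 (h.distortion_left a b)).1]

theorem of_isometry {Z : Type*} [PseudoMetricSpace Z] {Φ : X → Z} {Ψ : Y → Z}
    (hΦ : Isometry Φ) (hΨ : Isometry Ψ) {r : ℝ} (hf : ∀ a, dist (Φ a) (Ψ (f a)) ≤ r)
    (hg : ∀ b, dist (Φ (g b)) (Ψ b) ≤ r) : IsGHApprox (2 * r) f g where
  distortion_left a b := by
    rw [← hΨ.dist_eq, ← hΦ.dist_eq, ← Real.dist_eq]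
    linarith [dist_dist_dist_le (Ψ (f a)) (Ψ (f b)) (Φ a) (Φ b), hf a, hf b,
      dist_comm (Ψ (f a)) (Φ a), dist_comm (Ψ (f b)) (Φ b)]
  distortion_right a b := by
    rw [← hΨ.dist_eq, ← hΦ.dist_eq, ← Real.dist_eq]
    linarith [dist_dist_dist_le (Φ (g a)) (Φ (g b)) (Ψ a) (Ψ b), hg a, hg b]
  leftInverse a := by
    rw [← hΦ.dist_eq]
    linarith [dist_triangle_right (Φ (g (f a))) (Φ a) (Ψ (f a)), hf a, hg (f a)]
  rightInverse b := by
    rw [← hΨ.dist_eq]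
    linarith [dist_triangle (Ψ (f (g b))) (Φ (g b)) (Ψ b), hf (g b), hg b,
      dist_comm (Ψ (f (g b))) (Φ (g b))]

end IsGHApprox

theorem IsCompact.exists_dist_le_hausdorffDist {Z : Type*} [PseudoMetricSpace Z] {s t : Set Z}
    (hs : IsCompact s) (ht : IsCompact t) (htne : t.Nonempty) {a : Z} (ha : a ∈ s) :
    ∃ b ∈ t, dist a b ≤ hausdorffDist s t := by
  obtain ⟨b, hb, hab⟩ := ht.exists_infDist_eq_dist htne a
  refine ⟨b, hb, hab ▸ infDist_le_hausdorffDist_of_mem ha ?_⟩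
  exact hausdorffEDist_ne_top_of_nonempty_of_bounded ⟨a, ha⟩ htne hs.isBounded ht.isBounded

theorem exists_isGHApprox_two_mul_ghDist (X Y : Type*) [MetricSpace X] [CompactSpace X]
    [Nonempty X] [MetricSpace Y] [CompactSpace Y] [Nonempty Y] :
    ∃ (f : X → Y) (g : Y → X), IsGHApprox (2 * ghDist X Y) f g := by
  have hΦ := isometry_optimalGHInjl X Y
  have hΨ := isometry_optimalGHInjr X Y
  have hA := isCompact_range hΦ.continuous
  have hB := isCompact_range hΨ.continuous
  have hF : ∀ a, ∃ b, dist (optimalGHInjl X Y a) (optimalGHInjr X Y b) ≤ ghDist X Y := by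
    intro a
    obtain ⟨_, ⟨b, rfl⟩, hb⟩ :=
      hA.exists_dist_le_hausdorffDist hB (Set.range_nonempty _) (Set.mem_range_self a)
    exact ⟨b, hausdorffDist_optimal (X := X) (Y := Y) ▸ hb⟩
  have hG : ∀ b, ∃ a, dist (optimalGHInjl X Y a) (optimalGHInjr X Y b) ≤ ghDist X Y := by
    intro b
    obtain ⟨_, ⟨a, rfl⟩, ha⟩ :=
      hB.exists_dist_le_hausdorffDist hA (Set.range_nonempty _) (Set.mem_range_self b)
    rw [hausdorffDist_comm, hausdorffDist_optimal, dist_comm] at ha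
    exact ⟨a, ha⟩
  choose f hf using hF
  choose g hg using hG
  exact ⟨f, g, IsGHApprox.of_isometry hΦ hΨ hf hg⟩

end GHApprox

theorem eq_or_eq_or_eq_of_mem_pair {α : Type*} {a b u v w : α} (hu : u ∈ ({a, b} : Set α))
    (hv : v ∈ ({a, b} : Set α)) (hw : w ∈ ({a, b} : Set α)) : u = v ∨ u = w ∨ v = w := by
  rcases hu with rfl | rfl <;> rcases hv with rfl | rfl <;> rcases hw with rfl | rfl <;> simp

section Geometry

variable {N : ℕ} {M : ℝ} {z : Fin N → ℝ}

def pairSet (M : ℝ) (z : Fin N → ℝ) (n : Fin N) : Set (ℝ × ℝ) :=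
  {pp M z n, pm M z n}

theorem mem_Kset_iff {w : ℝ × ℝ} :
    w ∈ Kset M z ↔ ∃ n, w ∈ pairSet M z n ∨ w ∈ box M n := by
  simp only [Kset, pairSet, Set.mem_iUnion, Set.mem_union]

theorem box_subset_Kset (n : Fin N) : box M n ⊆ Kset M z :=
  fun _ hw => mem_Kset_iff.2 ⟨n, Or.inr hw⟩

theorem fst_of_mem_pairSet {n : Fin N} {w : ℝ × ℝ} (hw : w ∈ pairSet M z n) :
    w.1 = 10 * M * n := by
  rcases hw with rfl | rfl <;> rfl

theorem abs_snd_le_of_mem_Kset (hz : ∀ n, z n ∈ Set.Icc 0 M) {w : ℝ × ℝ} (hw : w ∈ Kset M z) :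
    |w.2| ≤ M := by
  obtain ⟨n, hn | hn⟩ := mem_Kset_iff.1 hw
  · obtain ⟨h₀, h₁⟩ := hz n
    rcases hn with rfl | rfl <;> simp only [pp, pm, abs_le] <;> constructor <;> linarith
  · exact abs_le.2 hn.2

theorem abs_fst_sub_le_dist (w v : ℝ × ℝ) : |w.1 - v.1| ≤ dist w v := by
  rw [Prod.dist_eq, ← Real.dist_eq]
  exact le_max_left _ _

theorem dist_le_of_mem_box {k : ℕ} {w v : ℝ × ℝ} (hw : w ∈ box M k) (hv : v ∈ box M k) :
    dist w v ≤ 2 * M := by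
  rw [Prod.dist_eq]
  exact max_le ((Real.dist_le_of_mem_Icc hw.1 hv.1).trans (by linarith))
    ((Real.dist_le_of_mem_Icc hw.2 hv.2).trans (by linarith))

theorem exists_equilateral_triple_box (hM : 0 ≤ M) (k : ℕ) :
    ∃ a ∈ box M k, ∃ b ∈ box M k, ∃ c ∈ box M k,
      dist a b = 2 * M ∧ dist a c = 2 * M ∧ dist b c = 2 * M := by
  have h2M : 0 ≤ 2 * M := by linarith
  have e₁ : |-M - M| = 2 * M := by rw [abs_of_nonpos (by linarith)]; ring
  have e₂ (a : ℝ) : |a - (a + 2 * M)| = 2 * M := by rw [abs_of_nonpos (by linarith)]; ring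
  refine ⟨(4 * M + 10 * M * k, -M), ⟨⟨le_rfl, by linarith⟩, le_rfl, by linarith⟩,
    (4 * M + 10 * M * k, M), ⟨⟨le_rfl, by linarith⟩, by linarith, le_rfl⟩,
    (4 * M + 10 * M * k + 2 * M, M), ⟨⟨by linarith, le_rfl⟩, by linarith, le_rfl⟩, ?_, ?_, ?_⟩
  all_goals simp only [Prod.dist_eq, Real.dist_eq, sub_self, abs_zero, e₁, e₂, max_self,
    max_eq_left h2M, max_eq_right h2M]

theorem four_mul_le_dist_of_mem_pairSet_of_mem_box (hM : 0 ≤ M) {n : Fin N} {k : ℕ}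
    {w v : ℝ × ℝ} (hw : w ∈ pairSet M z n) (hv : v ∈ box M k) : 4 * M ≤ dist w v := by
  refine le_trans ?_ (abs_fst_sub_le_dist w v)
  rw [fst_of_mem_pairSet hw, le_abs]
  obtain ⟨h₁, h₂⟩ := hv.1
  rcases le_or_gt (n : ℕ) k with h | h
  · have : ((n : ℕ) : ℝ) ≤ k := by exact_mod_cast h
    right; nlinarith
  · have : (k : ℝ) + 1 ≤ (n : ℕ) := by exact_mod_cast h
    left; nlinarith

theorem ten_mul_le_dist_of_mem_pairSet (hM : 0 ≤ M) {m n : Fin N} (hmn : m ≠ n)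
    {w v : ℝ × ℝ} (hw : w ∈ pairSet M z m) (hv : v ∈ pairSet M z n) : 10 * M ≤ dist w v := by
  refine le_trans ?_ (abs_fst_sub_le_dist w v)
  rw [fst_of_mem_pairSet hw, fst_of_mem_pairSet hv, le_abs]
  rcases Fin.lt_or_lt_of_ne hmn with h | h
  · have : ((m : ℕ) : ℝ) + 1 ≤ (n : ℕ) := by exact_mod_cast h
    right; nlinarith
  · have : ((n : ℕ) : ℝ) + 1 ≤ (m : ℕ) := by exact_mod_cast h
    left; nlinarith

theorem mem_pairSet_of_dist_lt (hM : 0 < M) {m : Fin N} {w v : ℝ × ℝ}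
    (hw : w ∈ pairSet M z m) (hv : v ∈ Kset M z) (h : dist w v < 4 * M) :
    v ∈ pairSet M z m := by
  obtain ⟨n, hn | hn⟩ := mem_Kset_iff.1 hv
  · obtain rfl | hmn := eq_or_ne m n
    · exact hn
    · linarith [ten_mul_le_dist_of_mem_pairSet hM.le hmn hw hn]
  · linarith [four_mul_le_dist_of_mem_pairSet_of_mem_box hM.le hw hn]

theorem dist_pp_pm (n : Fin N) (hz : 0 ≤ z n) : dist (pp M z n) (pm M z n) = 2 * z n := by
  rw [Prod.dist_eq, Real.dist_eq, Real.dist_eq]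
  simp only [pp, pm, sub_self, abs_zero, sub_neg_eq_add]
  rw [abs_of_nonneg (by linarith), max_eq_right (by linarith)]
  ring

theorem dist_eq_zero_or_of_mem_pairSet {n : Fin N} (hz : 0 ≤ z n) {u v : ℝ × ℝ}
    (hu : u ∈ pairSet M z n) (hv : v ∈ pairSet M z n) : dist u v = 0 ∨ dist u v = 2 * z n := by
  rcases hu with rfl | rfl <;> rcases hv with rfl | rfl
  · exact Or.inl (dist_self _)
  · exact Or.inr (dist_pp_pm n hz)
  · exact Or.inr (dist_comm (pm M z n) _ ▸ dist_pp_pm n hz)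
  · exact Or.inl (dist_self _)

end Geometry

section Eccentricity

/-- The largest distance from a point of `pairSet M z m` to `Kset M z`, in units of `2 * M`;
it is attained at `pp M z 0` or at the far right corner of the last box. -/
def clusterEcc (N m : ℕ) : ℕ :=
  max (5 * m) (5 * (N - 1 - m) + 3)

variable {N : ℕ} {M : ℝ} {z : Fin N → ℝ}

theorem clusterEcc_injOn : Set.InjOn (clusterEcc N) (Set.Iio N) := by
  intro m hm n hn h
  simp only [Set.mem_Iio, clusterEcc] at hm hn h
  omega

theorem cast_clusterEcc {m : ℕ} (hm : m < N) :
    (clusterEcc N m : ℝ) = max (5 * (m : ℝ)) (5 * ((N : ℝ) - 1 - m) + 3) := by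
  rw [clusterEcc, Nat.cast_max, Nat.cast_add, Nat.cast_mul, Nat.cast_mul,
    Nat.cast_sub (by omega), Nat.cast_sub (by omega)]
  norm_num

theorem fst_mem_Icc_of_mem_Kset (hM : 0 ≤ M) {w : ℝ × ℝ} (hw : w ∈ Kset M z) :
    w.1 ∈ Set.Icc 0 (10 * M * ((N : ℝ) - 1) + 6 * M) := by
  obtain ⟨n, hn | hn⟩ := mem_Kset_iff.1 hw
  · have : ((n : ℕ) : ℝ) + 1 ≤ N := by exact_mod_cast n.isLt
    rw [fst_of_mem_pairSet hn]
    constructor <;> nlinarith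
  · have : ((n : ℕ) : ℝ) + 1 ≤ N := by exact_mod_cast n.isLt
    obtain ⟨h₁, h₂⟩ := hn.1
    constructor <;> nlinarith

theorem dist_le_clusterEcc (hM : 0 ≤ M) (hz : ∀ n, z n ∈ Set.Icc 0 M) {m : Fin N}
    {w v : ℝ × ℝ} (hw : w ∈ pairSet M z m) (hv : v ∈ Kset M z) :
    dist w v ≤ 2 * M * clusterEcc N m := by
  have hmN : ((m : ℕ) : ℝ) + 1 ≤ N := by exact_mod_cast m.isLt
  rw [cast_clusterEcc m.isLt, Prod.dist_eq, Real.dist_eq, Real.dist_eq]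
  set E := max (5 * ((m : ℕ) : ℝ)) (5 * ((N : ℝ) - 1 - (m : ℕ)) + 3)
  have hE₁ := mul_le_mul_of_nonneg_left (le_max_left _ _ : 5 * ((m : ℕ) : ℝ) ≤ E)
    (by linarith : 0 ≤ 2 * M)
  have hE₂ := mul_le_mul_of_nonneg_left (le_max_right _ _ : 5 * ((N : ℝ) - 1 - (m : ℕ)) + 3 ≤ E)
    (by linarith : 0 ≤ 2 * M)
  refine max_le ?_ ?_
  · obtain ⟨h₀, h₁⟩ := fst_mem_Icc_of_mem_Kset hM hv
    rw [fst_of_mem_pairSet hw, abs_le]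
    constructor <;> nlinarith
  · have hw₂ := abs_snd_le_of_mem_Kset hz (mem_Kset_iff.2 ⟨m, Or.inl hw⟩)
    have hv₂ := abs_snd_le_of_mem_Kset hz hv
    have hM3 : 2 * M * 3 ≤ 2 * M * E := mul_le_mul_of_nonneg_left
      (le_max_of_le_right (by linarith)) (by linarith)
    linarith [abs_sub w.2 v.2]

theorem exists_clusterEcc_le_dist (hM : 0 ≤ M) {m : Fin N} {w : ℝ × ℝ}
    (hw : w ∈ pairSet M z m) : ∃ v ∈ Kset M z, 2 * M * clusterEcc N m ≤ dist w v := by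
  have hN : 0 < N := m.pos
  rw [cast_clusterEcc m.isLt]
  refine (le_total (5 * ((m : ℕ) : ℝ)) (5 * ((N : ℝ) - 1 - (m : ℕ)) + 3)).elim
    (fun h => ?_) (fun h => ?_)
  · have hlast : ((N - 1 : ℕ) : ℝ) = N - 1 := by rw [Nat.cast_sub hN, Nat.cast_one]
    refine ⟨(4 * M + 10 * M * ((N - 1 : ℕ) : ℝ) + 2 * M, 0),
      box_subset_Kset ⟨N - 1, by omega⟩ ⟨⟨by linarith, le_rfl⟩, by linarith, hM⟩, ?_⟩
    refine le_trans ?_ (abs_fst_sub_le_dist _ _)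
    rw [max_eq_right h, fst_of_mem_pairSet hw, abs_sub_comm, hlast, le_abs]
    exact Or.inl (le_of_eq (by ring))
  · refine ⟨pp M z ⟨0, hN⟩, pp_mem M z _, le_trans ?_ (abs_fst_sub_le_dist _ _)⟩
    rw [max_eq_left h, fst_of_mem_pairSet hw, le_abs]
    exact Or.inl (le_of_eq (by simp only [pp, Nat.cast_zero, mul_zero, sub_zero]; ring))

end Eccentricity

section Approximation

variable {N : ℕ} {M r : ℝ} {x y : Fin N → ℝ} {f : Kset M x → Kset M y} {g : Kset M y → Kset M x}

theorem not_mem_pairSet_of_mem_box (hM : 0 < M) (hr : r < M) (hfg : IsGHApprox (2 * r) f g)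
    {a : Kset M x} {k : Fin N} (ha : (a : ℝ × ℝ) ∈ box M k) (l : Fin N) :
    (f a : ℝ × ℝ) ∉ pairSet M y l := by
  intro hfa
  obtain ⟨b₁, hb₁, b₂, hb₂, b₃, hb₃, h₁₂, h₁₃, h₂₃⟩ := exists_equilateral_triple_box hM.le k
  have hmem (b : ℝ × ℝ) (hb : b ∈ box M k) :
      (f ⟨b, box_subset_Kset k hb⟩ : ℝ × ℝ) ∈ pairSet M y l :=
    mem_pairSet_of_dist_lt hM hfa (f _).2 <| by
      have := hfg.dist_le a ⟨b, box_subset_Kset k hb⟩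
      simp only [Subtype.dist_eq] at this
      linarith [dist_le_of_mem_box ha hb]
  have hne (b b' : ℝ × ℝ) (hb : b ∈ box M k) (hb' : b' ∈ box M k) (hd : dist b b' = 2 * M) :
      (f ⟨b, box_subset_Kset k hb⟩ : ℝ × ℝ) ≠ f ⟨b', box_subset_Kset k hb'⟩ := fun h => by
    have := hfg.le_dist ⟨b, box_subset_Kset k hb⟩ ⟨b', box_subset_Kset k hb'⟩
    rw [Subtype.ext h, dist_self, Subtype.dist_eq, hd] at this
    linarith
  rcases eq_or_eq_or_eq_of_mem_pair (hmem _ hb₁) (hmem _ hb₂) (hmem _ hb₃) with h | h | h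
  exacts [hne _ _ hb₁ hb₂ h₁₂ h, hne _ _ hb₁ hb₃ h₁₃ h, hne _ _ hb₂ hb₃ h₂₃ h]

theorem comp_mem_pairSet (hM : 0 < M) (hr : r < M) (hfg : IsGHApprox (2 * r) f g)
    {a : Kset M x} {m : Fin N} (ha : (a : ℝ × ℝ) ∈ pairSet M x m) :
    (g (f a) : ℝ × ℝ) ∈ pairSet M x m :=
  mem_pairSet_of_dist_lt hM ha (g (f a)).2 <|
    dist_comm (a : ℝ × ℝ) _ ▸ (hfg.leftInverse a).trans_lt (by linarith)

theorem exists_map_mem_pairSet (hM : 0 < M) (hr : r < M) (hfg : IsGHApprox (2 * r) f g)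
    {a : Kset M x} {m : Fin N} (ha : (a : ℝ × ℝ) ∈ pairSet M x m) :
    ∃ l, (f a : ℝ × ℝ) ∈ pairSet M y l := by
  obtain ⟨l, hl | hl⟩ := mem_Kset_iff.1 (f a).2
  · exact ⟨l, hl⟩
  · exact absurd (comp_mem_pairSet hM hr hfg ha) (not_mem_pairSet_of_mem_box hM hr hfg.symm hl m)

theorem clusterEcc_le_of_map_mem_pairSet (hM : 0 < M) (hr : r < M)
    (hy : ∀ n, y n ∈ Set.Icc 0 M) (hfg : IsGHApprox (2 * r) f g) {a : Kset M x} {m l : Fin N}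
    (ha : (a : ℝ × ℝ) ∈ pairSet M x m) (hfa : (f a : ℝ × ℝ) ∈ pairSet M y l) :
    clusterEcc N m ≤ clusterEcc N l := by
  obtain ⟨v, hv, hfar⟩ := exists_clusterEcc_le_dist hM.le ha
  have h : 2 * M * clusterEcc N m < 2 * M * (clusterEcc N l + 1) :=
    calc 2 * M * clusterEcc N m ≤ dist a ⟨v, hv⟩ := hfar
      _ ≤ dist (f a) (f ⟨v, hv⟩) + 2 * r := hfg.le_dist _ _
      _ ≤ 2 * M * clusterEcc N l + 2 * r := by
        gcongr
        exact dist_le_clusterEcc hM.le hy hfa (f _).2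
      _ < 2 * M * (clusterEcc N l + 1) := by linarith
  exact Nat.lt_succ_iff.1 (by exact_mod_cast lt_of_mul_lt_mul_left h (by linarith))

theorem map_mem_pairSet (hM : 0 < M) (hr : r < M) (hx : ∀ n, x n ∈ Set.Icc 0 M)
    (hy : ∀ n, y n ∈ Set.Icc 0 M) (hfg : IsGHApprox (2 * r) f g)
    {a : Kset M x} {m : Fin N} (ha : (a : ℝ × ℝ) ∈ pairSet M x m) :
    (f a : ℝ × ℝ) ∈ pairSet M y m := by
  obtain ⟨l, hl⟩ := exists_map_mem_pairSet hM hr hfg ha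
  have hecc := le_antisymm (clusterEcc_le_of_map_mem_pairSet hM hr hy hfg ha hl)
    (clusterEcc_le_of_map_mem_pairSet hM hr hx hfg.symm hl (comp_mem_pairSet hM hr hfg ha))
  rwa [Fin.ext (clusterEcc_injOn m.isLt l.isLt hecc)]

theorem le_or_abs_sub_le (hM : 0 < M) (hr : r < M) (hx : ∀ n, x n ∈ Set.Icc 0 M)
    (hy : ∀ n, y n ∈ Set.Icc 0 M) (hfg : IsGHApprox (2 * r) f g) (n : Fin N) :
    x n ≤ r ∨ |x n - y n| ≤ r := by
  have hp := map_mem_pairSet hM hr hx hy hfg (a := ⟨pp M x n, pp_mem M x n⟩) (Or.inl rfl)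
  have hm := map_mem_pairSet hM hr hx hy hfg (a := ⟨pm M x n, pm_mem M x n⟩) (Or.inr rfl)
  have hd := hfg.distortion_left ⟨pp M x n, pp_mem M x n⟩ ⟨pm M x n, pm_mem M x n⟩
  simp only [Subtype.dist_eq, dist_pp_pm n (hx n).1] at hd
  rcases dist_eq_zero_or_of_mem_pairSet (hy n).1 hp hm with h | h <;> rw [h] at hd
  · left
    linarith [(abs_le.1 hd).1]
  · right
    rw [abs_le] at hd ⊢
    constructor <;> linarith

theorem abs_sub_le_of_isGHApprox (hM : 0 < M) (hr : r < M) (hx : ∀ n, x n ∈ Set.Icc 0 M)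
    (hy : ∀ n, y n ∈ Set.Icc 0 M) (hfg : IsGHApprox (2 * r) f g) (n : Fin N) :
    |x n - y n| ≤ r := by
  rcases le_or_abs_sub_le hM hr hx hy hfg n with hxr | h
  · rcases le_or_abs_sub_le hM hr hy hx hfg.symm n with hyr | h
    · rw [abs_le]
      constructor <;> linarith [(hx n).1, (hy n).1]
    · rwa [abs_sub_comm]
  · exact h

end Approximation

/-- `d^N(x,y) ≤ d_GH(K_x, K_y)`, where `K_x`, `K_y` are regarded as nonempty compact
metric subspaces of ℝ² with the Chebyshev distance. -/
theorem dist_le_ghDist_Kset {N : ℕ} (hN : 0 < N) {M : ℝ} (hM : 0 < M)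
    (x y : Fin N → ℝ) (hx : ∀ n, x n ∈ Set.Icc (0 : ℝ) M) (hy : ∀ n, y n ∈ Set.Icc (0 : ℝ) M) :
    dist x y ≤
      dist (@GromovHausdorff.toGHSpace ↥(Kset M x) _ _ ((Kset_nonempty hN M x).to_subtype))
        (@GromovHausdorff.toGHSpace ↥(Kset M y) _ _ ((Kset_nonempty hN M y).to_subtype)) := by
  have := (Kset_nonempty hN M x).to_subtype
  have := (Kset_nonempty hN M y).to_subtype
  change dist x y ≤ ghDist (Kset M x) (Kset M y)
  refine (dist_pi_le_iff dist_nonneg).2 fun n => ?_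
  rw [Real.dist_eq]
  rcases le_or_gt M (ghDist (Kset M x) (Kset M y)) with hMr | hrM
  · refine le_trans (abs_le.2 ⟨?_, ?_⟩) hMr <;> linarith [(hx n).1, (hx n).2, (hy n).1, (hy n).2]
  · obtain ⟨f, g, hfg⟩ := exists_isGHApprox_two_mul_ghDist (Kset M x) (Kset M y)
    exact abs_sub_le_of_isGHApprox hM hrM hx hy hfg n
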